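/- Let G be a Polish group that contains a dense perfect subgroup. Then every group homomorphism from G to ℤ is trivial; in particular Hom(G, ℤ) = 0. -/

import Mathlib

/-!
Suppose `φ g = c ≠ 0`. The dense subgroup `P` is perfect, so it lies in `ker φ`, and the fibre
`φ⁻¹(c) ⊇ gP` accumulates at `1`. In a completely metrizable group one can then choose
`xₙ ∈ φ⁻¹(c)` tending to `1` so fast that the nested products `yₙ = xₙ yₙ₊₁ᵏ` converge, which gives
`φ yₙ = c + k φ yₙ₊₁` for all `n`. Then `(k - 1) φ y₀ + c` is divisible by every power of `k`,
so `k - 1 ∣ c`, which fails for `k = |c| + 2`.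
-/

open Filter Topology TopologicalSpace

section InfiniteComposition

variable {X A : Type*} {f : A → X → X}

theorem continuous_foldr [TopologicalSpace X] (hf : ∀ a, Continuous (f a)) (l : List A) :
    Continuous fun x => l.foldr f x := by
  induction l with
  | nil => exact continuous_id
  | cons a l ih => exact (hf a).comp ih

theorem exists_forall_dist_foldr_drop_lt [MetricSpace X] (hf : ∀ a, Continuous (f a)) {x₀ : X}
    (hx₀ : x₀ ∈ closure (Set.range fun a => f a x₀)) (l : List A) {ε : ℝ} (hε : 0 < ε) :
    ∃ a, ∀ n ≤ l.length, dist ((l.drop n).foldr f (f a x₀)) ((l.drop n).foldr f x₀) < ε := by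
  have hnear : ∀ᶠ x in 𝓝 x₀, ∀ n ∈ Set.Iic l.length,
      dist ((l.drop n).foldr f x) ((l.drop n).foldr f x₀) < ε :=
    (eventually_all_finite (Set.finite_Iic _)).2 fun n _ =>
      (continuous_foldr hf _).continuousAt.eventually (Metric.ball_mem_nhds _ hε)
  obtain ⟨_, ⟨a, rfl⟩, ha⟩ := ((mem_closure_iff_frequently.1 hx₀).and_eventually hnear).exists
  exact ⟨a, ha⟩

/-- The `m`-th map is chosen to move every partial composite `f aₙ ∘ ⋯ ∘ f aₘ₋₁` at `x₀` by less
than `2⁻ᵐ`, so `yₙ = lim_m (f aₙ ∘ ⋯ ∘ f aₘ₋₁) x₀` exists for every `n`. -/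
theorem exists_seq_eq_apply_succ [TopologicalSpace X] [IsCompletelyMetrizableSpace X]
    (hf : ∀ a, Continuous (f a)) {x₀ : X} (hx₀ : x₀ ∈ closure (Set.range fun a => f a x₀)) :
    ∃ (a : ℕ → A) (y : ℕ → X), ∀ n, y n = f (a n) (y (n + 1)) := by
  let _ := upgradeIsCompletelyMetrizable X
  choose pick hpick using fun l : List A =>
    exists_forall_dist_foldr_drop_lt hf hx₀ l (by positivity : 0 < (1 / 2 : ℝ) ^ l.length)
  let L : ℕ → List A := fun m => Nat.rec [] (fun _ l => l ++ [pick l]) m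
  let a : ℕ → A := fun m => pick (L m)
  have hL : ∀ m, L m = (List.range m).map a := by
    intro m
    induction m with
    | zero => rfl
    | succ m ih => simp only [List.range_succ, List.map_append, ← ih]; rfl
  have hlen : ∀ m, (L m).length = m := by simp [hL]
  let q : ℕ → ℕ → X := fun n m => ((L m).drop n).foldr f x₀
  have hq : ∀ n m, dist (q n m) (q n (m + 1)) ≤ 1 * (1 / 2 : ℝ) ^ m := by
    intro n m
    rcases le_or_gt n m with hnm | hmn
    · rw [← hlen m] at hnm
      have hclose := (hpick (L m) n hnm).le
      rw [hlen] at hclose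
      simpa [q, L, dist_comm, List.drop_append_of_le_length hnm] using hclose
    · simp [q, List.drop_eq_nil_of_le, hlen, hmn.le, Nat.succ_le_of_lt hmn]
  choose y hy using fun n =>
    cauchySeq_tendsto_of_complete (cauchySeq_of_le_geometric _ _ (by norm_num) (hq n))
  refine ⟨a, y, fun n => tendsto_nhds_unique (hy n) ?_⟩
  refine ((hf (a n)).tendsto _ |>.comp (hy (n + 1))).congr' ?_
  filter_upwards [eventually_gt_atTop n] with m hm
  have hn : n < (L m).length := by simp [hlen, hm]
  simp only [Function.comp_apply, q, List.drop_eq_getElem_cons hn, List.foldr_cons]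
  simp [hL]

end InfiniteComposition

theorem exists_seq_mem_eq_mul_pow_succ {G : Type*} [Monoid G] [TopologicalSpace G]
    [ContinuousMul G] [IsCompletelyMetrizableSpace G] {S : Set G} (hS : (1 : G) ∈ closure S)
    (k : ℕ) : ∃ x y : ℕ → G, (∀ n, x n ∈ S) ∧ ∀ n, y n = x n * y (n + 1) ^ k := by
  obtain ⟨x, y, hy⟩ := exists_seq_eq_apply_succ (f := fun (s : S) g => (s : G) * g ^ k)
    (fun s => continuous_const.mul (continuous_pow k)) (x₀ := 1) (by simpa using hS)
  exact ⟨fun n => x n, y, fun n => (x n).2, hy⟩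

theorem Int.sub_one_dvd_of_forall_eq_add_mul {k c : ℤ} (hk : k.natAbs ≠ 1) {m : ℕ → ℤ}
    (h : ∀ n, m n = c + k * m (n + 1)) : k - 1 ∣ c := by
  have hpow : ∀ n, (k - 1) * m 0 + c = k ^ n * ((k - 1) * m n + c) := by
    intro n
    induction n with
    | zero => ring
    | succ n ih => rw [ih, h n]; ring
  have hzero : (k - 1) * m 0 + c = 0 := by
    by_contra hne
    obtain ⟨n, hn⟩ := Int.finiteMultiplicity_iff.2 ⟨hk, hne⟩
    exact hn (Dvd.intro _ (hpow (n + 1)).symm)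
  exact ⟨-m 0, by linarith⟩

theorem MonoidHom.one_notMem_closure_preimage_ofAdd {G : Type*} [Monoid G] [TopologicalSpace G]
    [ContinuousMul G] [IsCompletelyMetrizableSpace G] (φ : G →* Multiplicative ℤ) {c : ℤ}
    (hc : c ≠ 0) : (1 : G) ∉ closure (φ ⁻¹' {Multiplicative.ofAdd c}) := by
  intro h
  obtain ⟨x, y, hx, hy⟩ := exists_seq_mem_eq_mul_pow_succ h (c.natAbs + 2)
  have hrec : ∀ n, (φ (y n)).toAdd = c + (c.natAbs + 2 : ℕ) * (φ (y (n + 1))).toAdd := by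
    intro n
    rw [hy n, map_mul, map_pow, toAdd_mul, toAdd_pow, hx n]
    simp
  have hdvd := Int.sub_one_dvd_of_forall_eq_add_mul (by omega) hrec
  have := Nat.le_of_dvd (Int.natAbs_pos.2 hc) (Int.natAbs_dvd_natAbs.2 hdvd)
  omega

theorem Subgroup.le_ker_of_commutator_eq_top {G A : Type*} [Group G] [CommGroup A]
    {P : Subgroup G} (hP : _root_.commutator P = ⊤) (f : G →* A) : P ≤ f.ker := fun p hp => by
  simpa using (hP ▸ Abelianization.commutator_subset_ker (f.comp P.subtype))
    (Subgroup.mem_top (⟨p, hp⟩ : P))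

theorem MonoidHom.eq_one_of_dense_ker {G : Type*} [Group G] [TopologicalSpace G]
    [ContinuousMul G] [IsCompletelyMetrizableSpace G] (φ : G →* Multiplicative ℤ)
    (hφ : Dense (φ.ker : Set G)) : φ = 1 := by
  ext g
  by_contra hg
  refine φ.one_notMem_closure_preimage_ofAdd (c := (φ g).toAdd) (by simpa using hg) ?_
  refine closure_mono ?_ ((hφ.smul g).closure_eq ▸ Set.mem_univ _)
  rintro _ ⟨h, hh, rfl⟩
  simpa using hh

/-- If a Polish group `G` contains a dense perfect subgroup, then every group
homomorphism `G → ℤ` is trivial. -/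
theorem hom_trivial_of_dense_perfect {G : Type*} [Group G] [TopologicalSpace G]
    [IsTopologicalGroup G] [PolishSpace G] (P : Subgroup G)
    (hdense : Dense (P : Set G)) (hperf : commutator ↥P = ⊤)
    (φ : G → ℤ) (hφ : ∀ a b : G, φ (a * b) = φ a + φ b) :
    ∀ g : G, φ g = 0 := by
  let ψ : G →* Multiplicative ℤ := MonoidHom.mk' (fun g => .ofAdd (φ g)) hφ
  have hψ : ψ = 1 := ψ.eq_one_of_dense_ker (hdense.mono (P.le_ker_of_commutator_eq_top hperf ψ))
  exact fun g => congrArg Multiplicative.toAdd (DFunLike.congr_fun hψ g)
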